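/- arXiv:1909.06322 — 2 statements merged into one kernel-verified Lean document; each statement's English description precedes it below -/
import Mathlib

section
/- Suppose f, g : ℝ^d → ℝ are differentiable, f is λ-strongly convex, and ‖∇f(θ) - ∇g(θ)‖_∞ ≤ γ/n for all θ, where the difference ∇f(θ) - ∇g(θ) is supported on a set of at most 2s coordinates for every θ. If θ_f and θ_g are the global minimizers of f and g respectively, then ‖θ_f - θ_g‖₂ ≤ √(2s)·γ/(nλ). -/
open scoped RealInnerProductSpace
open Finset

/-! Adding the strong-convexity inequality at `(θ, θ_f)` and at `(θ_f, θ)` gives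
`λ‖θ - θ_f‖² ≤ ⟪∇f θ - ∇f θ_f, θ - θ_f⟫`. At `θ = θ_g` both `∇f θ_f` and `∇g θ_g` vanish,
so by Cauchy–Schwarz `λ‖θ_g - θ_f‖ ≤ ‖∇f θ_g - ∇g θ_g‖₂`, and a vector with at most `2s`
nonzero coordinates, each of size at most `γ/n`, has Euclidean norm at most `√(2s)·γ/n`. -/

theorem gradient_eq_zero_of_forall_le {E : Type*} [NormedAddCommGroup E] [InnerProductSpace ℝ E]
    [CompleteSpace E] {f : E → ℝ} {a : E} (h : ∀ x, f a ≤ f x) : gradient f a = 0 := by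
  rw [gradient, IsLocalMin.fderiv_eq_zero (Filter.Eventually.of_forall h), map_zero]

theorem EuclideanSpace.norm_le_sqrt_card_support_mul {ι : Type*} [Fintype ι]
    (v : EuclideanSpace ℝ ι) {c : ℝ} (hc : ∀ i, |v i| ≤ c) :
    ‖v‖ ≤ √(#{i | v i ≠ 0} : ℕ) * c := by
  set S : Finset ι := {i | v i ≠ 0}
  have hrhs : 0 ≤ √(#S : ℕ) * c := by
    rcases S.eq_empty_or_nonempty with hS | ⟨i, -⟩
    · simp [hS]
    · exact mul_nonneg (Real.sqrt_nonneg _) ((abs_nonneg _).trans (hc i))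
  refine le_of_pow_le_pow_left₀ two_ne_zero hrhs ?_
  calc ‖v‖ ^ 2 = ∑ i ∈ S, v i ^ 2 := by
        rw [EuclideanSpace.norm_sq_eq, ← sum_filter_ne_zero]
        simp [S]
    _ ≤ ∑ _i ∈ S, c ^ 2 := sum_le_sum fun i _ => sq_le_sq' (abs_le.mp (hc i)).1 (abs_le.mp (hc i)).2
    _ = (√(#S : ℕ) * c) ^ 2 := by
        rw [sum_const, nsmul_eq_mul, mul_pow, Real.sq_sqrt (Nat.cast_nonneg _)]

section StrongConvexity

variable {E : Type*} [NormedAddCommGroup E] [InnerProductSpace ℝ E] [CompleteSpace E]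
  {f : E → ℝ} {lam : ℝ}

theorem mul_norm_sq_le_inner_gradient_sub
    (hsc : ∀ x y : E, f x - f y - ⟪gradient f y, x - y⟫ ≥ lam / 2 * ‖x - y‖ ^ 2) (x y : E) :
    lam * ‖x - y‖ ^ 2 ≤ ⟪gradient f x - gradient f y, x - y⟫ := by
  have hxy := hsc x y
  have hyx := hsc y x
  rw [norm_sub_rev y x, ← neg_sub x y, inner_neg_right] at hyx
  rw [inner_sub_left]
  linarith

theorem mul_norm_sub_le_norm_gradient
    (hsc : ∀ x y : E, f x - f y - ⟪gradient f y, x - y⟫ ≥ lam / 2 * ‖x - y‖ ^ 2)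
    {a : E} (ha : gradient f a = 0) (x : E) :
    lam * ‖x - a‖ ≤ ‖gradient f x‖ := by
  rcases (norm_nonneg (x - a)).eq_or_lt with h | h
  · rw [← h, mul_zero]
    exact norm_nonneg _
  refine le_of_mul_le_mul_right ?_ h
  calc lam * ‖x - a‖ * ‖x - a‖ = lam * ‖x - a‖ ^ 2 := by ring
    _ ≤ ⟪gradient f x, x - a⟫ := by
        simpa [ha] using mul_norm_sq_le_inner_gradient_sub hsc x a
    _ ≤ ‖gradient f x‖ * ‖x - a‖ := real_inner_le_norm _ _

end StrongConvexity

theorem stmt_3_general {d : ℕ} (s : ℕ) (lam γ n : ℝ) (hlam : 0 < lam) (hn : 0 < n)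
    (hγ : 0 ≤ γ)
    (f g : EuclideanSpace ℝ (Fin d) → ℝ)
    (hsc : ∀ θ₁ θ₂ : EuclideanSpace ℝ (Fin d),
      f θ₁ - f θ₂ - ⟪gradient f θ₂, θ₁ - θ₂⟫ ≥ lam / 2 * ‖θ₁ - θ₂‖ ^ 2)
    (hinf : ∀ θ : EuclideanSpace ℝ (Fin d), ∀ i,
      |gradient f θ i - gradient g θ i| ≤ γ / n)
    (hsupp : ∀ θ : EuclideanSpace ℝ (Fin d),
      (Finset.univ.filter (fun i => gradient f θ i - gradient g θ i ≠ 0)).card ≤ 2 * s)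
    (θf θg : EuclideanSpace ℝ (Fin d))
    (hminf : ∀ θ, f θf ≤ f θ) (hming : ∀ θ, g θg ≤ g θ) :
    ‖θf - θg‖ ≤ Real.sqrt (2 * s) * γ / (n * lam) := by
  set v := gradient f θg - gradient g θg
  have hv : gradient f θg = v := by
    simp [v, gradient_eq_zero_of_forall_le hming]
  have hsparse : ‖v‖ ≤ √(2 * s) * (γ / n) :=
    calc ‖v‖ ≤ √(#{i | v i ≠ 0} : ℕ) * (γ / n) :=
          EuclideanSpace.norm_le_sqrt_card_support_mul v (hinf θg)
      _ ≤ √(2 * s) * (γ / n) := by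
          gcongr
          exact_mod_cast hsupp θg
  have hsens : lam * ‖θg - θf‖ ≤ ‖v‖ :=
    hv ▸ mul_norm_sub_le_norm_gradient hsc (gradient_eq_zero_of_forall_le hminf) θg
  rw [norm_sub_rev, show √(2 * s) * γ / (n * lam) = √(2 * s) * (γ / n) / lam by ring,
    le_div_iff₀ hlam]
  linarith

/-- Sensitivity bound combining strong convexity with a sparse `ℓ_∞` gradient
difference bound: `‖θ_f - θ_g‖₂ ≤ √(2s)·γ/(nλ)`. -/
theorem stmt_3 {d : ℕ} (s : ℕ) (lam γ n : ℝ) (hlam : 0 < lam) (hn : 0 < n)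
    (hγ : 0 ≤ γ)
    (f g : EuclideanSpace ℝ (Fin d) → ℝ)
    (hf : Differentiable ℝ f) (hg : Differentiable ℝ g)
    (hsc : ∀ θ₁ θ₂ : EuclideanSpace ℝ (Fin d),
      f θ₁ - f θ₂ - ⟪gradient f θ₂, θ₁ - θ₂⟫ ≥ lam / 2 * ‖θ₁ - θ₂‖ ^ 2)
    (hinf : ∀ θ : EuclideanSpace ℝ (Fin d), ∀ i,
      |gradient f θ i - gradient g θ i| ≤ γ / n)
    (hsupp : ∀ θ : EuclideanSpace ℝ (Fin d),
      (Finset.univ.filter (fun i => gradient f θ i - gradient g θ i ≠ 0)).card ≤ 2 * s)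
    (θf θg : EuclideanSpace ℝ (Fin d))
    (hminf : ∀ θ, f θf ≤ f θ) (hming : ∀ θ, g θg ≤ g θ) :
    ‖θf - θg‖ ≤ Real.sqrt (2 * s) * γ / (n * lam) :=
  stmt_3_general s lam γ n hlam hn hγ f g hsc hinf hsupp θf θg hminf hming
end

section
/- Let θ* ∈ ℝ^d with ‖θ*‖₀ ≤ s*, let θ̃ ∈ ℝ^d, and let s > s*. Then the hard-thresholded vector θ = H_s(θ̃) satisfies ‖θ - θ*‖₂² ≤ (1 + 2√(s*)/√(s - s*)) · ‖θ̃ - θ*‖₂². -/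
/-!
Let `S` be the support of `θ*`, `A = S \ Ω` the support entries missed by thresholding and
`B = Ω \ S` the kept entries outside the support. Off `Ω` the error of `θ` is `θ*` restricted
to `A`, and `‖θ*_A‖ ≤ ‖θ̃_A‖ + ‖(θ̃ - θ*)_A‖`. Each `|θ̃ i|` with `i ∈ A` is dominated by each
`|θ̃ j|` with `j ∈ B`, and `#B ≥ s - s* + #A`, so comparing averages gives
`‖θ̃_A‖² (s - s* + #A) ≤ #A ‖θ̃_B‖² ≤ s* ‖θ̃_B‖²`, where `θ̃_B = (θ̃ - θ*)_B`. Expanding the square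
and applying AM–GM to the cross term `2 ‖θ̃_A‖ ‖(θ̃ - θ*)_A‖` produces the factor
`2 √s* / √(s - s*)`.
-/

open Finset

theorem Finset.sum_mul_card_le_card_mul_sum {ι R : Type*} [CommSemiring R] [PartialOrder R]
    [IsOrderedRing R] {A B : Finset ι} {f : ι → R} (h : ∀ i ∈ A, ∀ j ∈ B, f i ≤ f j) :
    (∑ i ∈ A, f i) * #B ≤ #A * ∑ j ∈ B, f j :=
  calc (∑ i ∈ A, f i) * #B = ∑ i ∈ A, ∑ _j ∈ B, f i := by simp [sum_mul, mul_comm]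
    _ ≤ ∑ _i ∈ A, ∑ j ∈ B, f j := sum_le_sum fun i hi => sum_le_sum fun j hj => h i hi j hj
    _ = #A * ∑ j ∈ B, f j := by simp

theorem Real.sum_sub_sq_le {ι : Type*} (s : Finset ι) (f g : ι → ℝ) :
    ∑ i ∈ s, (f i - g i) ^ 2 ≤ (√(∑ i ∈ s, f i ^ 2) + √(∑ i ∈ s, g i ^ 2)) ^ 2 := by
  have hcs := Real.sum_mul_le_sqrt_mul_sqrt s f (-g)
  simp only [Pi.neg_apply, mul_neg, sum_neg_distrib, neg_sq] at hcs
  have hf := Real.sq_sqrt (sum_nonneg (s := s) fun i _ => sq_nonneg (f i))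
  have hg := Real.sq_sqrt (sum_nonneg (s := s) fun i _ => sq_nonneg (g i))
  have hexp : ∑ i ∈ s, (f i - g i) ^ 2
      = ∑ i ∈ s, f i ^ 2 + ∑ i ∈ s, g i ^ 2 - 2 * ∑ i ∈ s, f i * g i := by
    simp only [sub_sq, sum_add_distrib, sum_sub_distrib, mul_sum]; ring_nf
  rw [hexp]; linarith

theorem sq_add_two_mul_le_of_sq_mul_le {p q u x y : ℝ} (hp : 0 < p) (hq : 0 ≤ q)
    (h : u ^ 2 * (p ^ 2 + q ^ 2) ≤ q ^ 2 * y ^ 2) :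
    u ^ 2 + 2 * u * x ≤ 2 * q / p * (x ^ 2 + y ^ 2) := by
  rw [div_mul_eq_mul_div, le_div_iff₀ hp]
  rcases hq.eq_or_lt with rfl | hq
  · have hup : (u * p) ^ 2 = 0 := le_antisymm (by linarith) (sq_nonneg _)
    obtain rfl : u = 0 := by simpa [hp.ne'] using hup
    simp
  · -- AM–GM `2pux ≤ 2qx² + p²u²/(2q)`; the hypothesis pays for the remaining `u²` terms.
    refine le_of_mul_le_mul_left ?_ (by positivity : 0 < 2 * q)
    linarith [sq_nonneg (2 * q * x - p * u), sq_nonneg (p * u - q * u), sq_nonneg (p * u),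
      sq_nonneg (q * u)]

theorem sq_sqrt_add_sqrt_le {U X Y t a σ : ℝ} (hU : 0 ≤ U) (hX : 0 ≤ X) (hY : 0 ≤ Y) (ht : 0 < t)
    (ha : 0 ≤ a) (haσ : a ≤ σ) (h : U * (t + a) ≤ a * Y) :
    (√U + √X) ^ 2 ≤ X + 2 * √σ / √t * (X + Y) := by
  have hUY : U ≤ Y := by
    by_contra! hlt
    nlinarith [mul_pos (hY.trans_lt hlt) ht, mul_le_mul_of_nonneg_left hlt.le ha]
  -- `a ↦ a / (t + a)` is increasing, so the hypothesis persists with `σ` in place of `a`.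
  have hσ : U * (t + σ) ≤ σ * Y := by
    nlinarith [mul_le_mul_of_nonneg_left hUY (sub_nonneg.2 haσ)]
  have key := sq_add_two_mul_le_of_sq_mul_le (u := √U) (x := √X) (y := √Y)
    (Real.sqrt_pos.2 ht) (Real.sqrt_nonneg σ)
    (by rwa [Real.sq_sqrt hU, Real.sq_sqrt ht.le, Real.sq_sqrt (ha.trans haσ), Real.sq_sqrt hY])
  rw [Real.sq_sqrt hU, Real.sq_sqrt hX, Real.sq_sqrt hY] at key
  rw [add_sq, Real.sq_sqrt hU, Real.sq_sqrt hX]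
  linarith

section HardThresholding

variable {ι : Type*} [Fintype ι] [DecidableEq ι]

theorem sum_sq_sdiff_mul_le {x : ι → ℝ} {S Ω : Finset ι} {s k : ℕ} (hS : #S ≤ k)
    (hΩ : #Ω = min s (Fintype.card ι)) (htop : ∀ i ∈ Ω, ∀ j ∉ Ω, |x j| ≤ |x i|) :
    (∑ i ∈ S \ Ω, x i ^ 2) * ((s : ℝ) - k + #(S \ Ω)) ≤ #(S \ Ω) * ∑ j ∈ Ω \ S, x j ^ 2 := by
  rcases (S \ Ω).eq_empty_or_nonempty with hA | ⟨i₀, hi₀⟩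
  · simp [hA]
  -- a missed index forces `Ω ≠ univ`, so the minimum in `hΩ` is `s`
  have hΩs : #Ω = s := by
    have := card_lt_univ_of_notMem (mem_sdiff.1 hi₀).2
    omega
  have hcard : #(Ω \ S) + #S = #(S \ Ω) + #Ω := by
    rw [card_sdiff_add_card, card_sdiff_add_card, union_comm]
  have hB : (s : ℝ) - k + #(S \ Ω) ≤ #(Ω \ S) := by
    have hcard' : ((#(Ω \ S) + #S : ℕ) : ℝ) = ((#(S \ Ω) + #Ω : ℕ) : ℝ) := congrArg _ hcard
    have hS' : (#S : ℝ) ≤ k := by exact_mod_cast hS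
    push_cast [hΩs] at hcard'
    linarith
  calc _ ≤ (∑ i ∈ S \ Ω, x i ^ 2) * #(Ω \ S) :=
        mul_le_mul_of_nonneg_left hB (sum_nonneg fun i _ => sq_nonneg (x i))
    _ ≤ _ := sum_mul_card_le_card_mul_sum fun i hi j hj =>
        sq_le_sq.2 (htop j (mem_sdiff.1 hj).1 i (mem_sdiff.1 hi).2)

theorem sum_sq_sdiff_le {θstar θtil : ι → ℝ} {S Ω : Finset ι} {s k : ℕ} (hks : k < s)
    (hS : ∀ i ∉ S, θstar i = 0) (hSk : #S ≤ k) (hΩ : #Ω = min s (Fintype.card ι))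
    (htop : ∀ i ∈ Ω, ∀ j ∉ Ω, |θtil j| ≤ |θtil i|) :
    ∑ i ∈ S \ Ω, θstar i ^ 2 ≤ ∑ i ∈ S \ Ω, (θtil i - θstar i) ^ 2 +
      2 * √k / √(s - k) *
        (∑ i ∈ S \ Ω, (θtil i - θstar i) ^ 2 + ∑ i ∈ Ω \ S, (θtil i - θstar i) ^ 2) := by
  have hY : ∑ j ∈ Ω \ S, θtil j ^ 2 = ∑ j ∈ Ω \ S, (θtil j - θstar j) ^ 2 :=
    sum_congr rfl fun j hj => by rw [hS j (mem_sdiff.1 hj).2, sub_zero]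
  calc ∑ i ∈ S \ Ω, θstar i ^ 2 = ∑ i ∈ S \ Ω, (θtil i - (θtil i - θstar i)) ^ 2 := by
        simp only [sub_sub_cancel]
    _ ≤ _ := Real.sum_sub_sq_le _ _ _
    _ ≤ _ := sq_sqrt_add_sqrt_le (sum_nonneg fun i _ => sq_nonneg _)
        (sum_nonneg fun i _ => sq_nonneg _) (sum_nonneg fun i _ => sq_nonneg _)
        (sub_pos.2 (Nat.cast_lt.2 hks)) (Nat.cast_nonneg _)
        (Nat.cast_le.2 ((card_le_card sdiff_subset).trans hSk))
        (hY ▸ sum_sq_sdiff_mul_le hSk hΩ htop)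

theorem sum_sq_sub_eq_of_threshold {θ θstar θtil : ι → ℝ} {S Ω : Finset ι}
    (hS : ∀ i ∉ S, θstar i = 0) (hH : ∀ i, θ i = if i ∈ Ω then θtil i else 0) :
    ∑ i, (θ i - θstar i) ^ 2 = ∑ i ∈ Ω, (θtil i - θstar i) ^ 2 + ∑ i ∈ S \ Ω, θstar i ^ 2 := by
  have hsub : S \ Ω ⊆ Ωᶜ := fun i hi => mem_compl.2 (mem_sdiff.1 hi).2
  rw [← sum_add_sum_compl Ω, ← sum_subset hsub fun i hi hiA => ?_]
  · congr 1 <;> refine sum_congr rfl fun i hi => ?_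
    · rw [hH, if_pos hi]
    · rw [hH, if_neg (mem_compl.1 (hsub hi)), zero_sub, neg_sq]
  · have hiS : i ∉ S := fun hiS => hiA (mem_sdiff.2 ⟨hiS, mem_compl.1 hi⟩)
    rw [hH, if_neg (mem_compl.1 hi), hS i hiS, sub_zero, sq, zero_mul]

end HardThresholding

/-- Hard-thresholding contraction inequality (Li et al. 2016, Lemma 3.3):
for `s*`-sparse `θ*` and `s > s*`, the vector `θ = H_s(θ̃)` satisfies
`‖θ - θ*‖² ≤ (1 + 2√s*/√(s - s*))·‖θ̃ - θ*‖²`. -/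
theorem stmt_5 {d : ℕ} (s sstar : ℕ) (hs : sstar < s)
    (θstar θtil : EuclideanSpace ℝ (Fin d))
    (hsparse : (Finset.univ.filter (fun i => θstar i ≠ 0)).card ≤ sstar)
    (Ω : Finset (Fin d)) (hcard : Ω.card = min s d)
    (htop : ∀ i ∈ Ω, ∀ j ∉ Ω, |θtil j| ≤ |θtil i|)
    (θ : EuclideanSpace ℝ (Fin d))
    (hH : ∀ i, θ i = if i ∈ Ω then θtil i else 0) :
    ‖θ - θstar‖ ^ 2 ≤
      (1 + 2 * Real.sqrt sstar / Real.sqrt (s - sstar)) * ‖θtil - θstar‖ ^ 2 := by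
  set S := univ.filter (fun i => θstar i ≠ 0)
  have hS : ∀ i ∉ S, θstar i = 0 := fun i hi => by simpa [S] using hi
  have htail := sum_sq_sdiff_le hs hS hsparse (by simpa using hcard) htop
  set c := 2 * √(sstar : ℝ) / √((s : ℝ) - sstar)
  have hc : 0 ≤ c := by positivity
  have hmiss : ∑ i ∈ S \ Ω, (θtil i - θstar i) ^ 2 ≤ ∑ i ∈ Ωᶜ, (θtil i - θstar i) ^ 2 :=
    sum_le_sum_of_subset_of_nonneg (fun i hi => mem_compl.2 (mem_sdiff.1 hi).2)
      fun i _ _ => sq_nonneg _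
  have hsymm : ∑ i ∈ S \ Ω, (θtil i - θstar i) ^ 2 + ∑ i ∈ Ω \ S, (θtil i - θstar i) ^ 2 ≤
      ∑ i, (θtil i - θstar i) ^ 2 := by
    rw [← sum_union (disjoint_sdiff_sdiff (x := S) (y := Ω))]
    exact sum_le_univ_sum_of_nonneg fun i => sq_nonneg _
  have hsplit := sum_add_sum_compl Ω fun i => (θtil i - θstar i) ^ 2
  simp only [EuclideanSpace.real_norm_sq_eq, PiLp.sub_apply]
  rw [sum_sq_sub_eq_of_threshold hS hH]
  linarith [mul_le_mul_of_nonneg_left hsymm hc]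
end
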